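/- arXiv:1811.06069 — 9 statements merged into one kernel-verified Lean document; each statement's English description precedes it below -/
import Mathlib

section
/- Let be a change action on A. Then the following are equivalent: (1) Â is complete, i.e. for all a, b ∈ A there exists δ ∈ ΔA with a ⊕ δ = b; (2) there exists a minus operator ⊖ : A × A → ΔA such that a ⊕ (b ⊖ a) = b for all a, b; (3) for every change action B̂ on a nonempty set B, every function f : B → A is differentiable. -/
/-- A change action: a base set `A`, a monoid of changes `Δ`, and a monoid action `act`. -/
structure ChangeAction (A : Type*) (Δ : Type*) where
  mul : Δ → Δ → Δ
  one : Δ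
  mul_assoc : ∀ x y z : Δ, mul (mul x y) z = mul x (mul y z)
  one_mul : ∀ x : Δ, mul one x = x
  mul_one : ∀ x : Δ, mul x one = x
  act : A → Δ → A
  act_one : ∀ a : A, act a one = a
  act_mul : ∀ (a : A) (x y : Δ), act a (mul x y) = act (act a x) y

/-- `f'` is a derivative of `f`: `f (a ⊕ δ) = f a ⊕ f' a δ`. -/
def IsDerivative {A ΔA B ΔB : Type*} (CA : ChangeAction A ΔA) (CB : ChangeAction B ΔB)
    (f : A → B) (f' : A → ΔA → ΔB) : Prop :=
  ∀ (a : A) (δ : ΔA), f (CA.act a δ) = CB.act (f a) (f' a δ)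

/-- `f` is differentiable: some derivative exists. -/
def CDifferentiable {A ΔA B ΔB : Type*} (CA : ChangeAction A ΔA) (CB : ChangeAction B ΔB)
    (f : A → B) : Prop :=
  ∃ f', IsDerivative CA CB f f'

/-- Completeness, existence of a minus operator, and universal differentiability
of functions into `A` (from any change action on a nonempty base) are equivalent. -/
theorem complete_tfae {A ΔA : Type} (CA : ChangeAction A ΔA) :
    ((∀ a b : A, ∃ δ : ΔA, CA.act a δ = b) ↔
      (∃ minus : A → A → ΔA, ∀ a b : A, CA.act a (minus b a) = b)) ∧
    ((∀ a b : A, ∃ δ : ΔA, CA.act a δ = b) ↔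
      (∀ (B ΔB : Type) (CB : ChangeAction B ΔB), Nonempty B →
        ∀ f : B → A, CDifferentiable CB CA f)) := by
  have h1 : (∀ a b : A, ∃ δ : ΔA, CA.act a δ = b) →
      (∃ minus : A → A → ΔA, ∀ a b : A, CA.act a (minus b a) = b) := by
    intro h
    choose m hm using h
    exact ⟨fun b a => m a b, fun a b => hm a b⟩
  constructor
  · constructor
    · exact h1
    · rintro ⟨minus, hm⟩ a b
      exact ⟨minus b a, hm a b⟩
  constructor
  · intro h B ΔB CB _ f
    obtain ⟨minus, hm⟩ := h1 h
    exact ⟨fun b δ => minus (f (CB.act b δ)) (f b), fun b δ => (hm _ _).symm⟩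
  · intro h a b
    -- use the change action on Bool with xor
    let CB : ChangeAction Bool Bool :=
      { mul := xor, one := false,
        mul_assoc := by decide, one_mul := by decide, mul_one := by decide,
        act := xor, act_one := by decide, act_mul := by decide }
    obtain ⟨f', hf'⟩ := h Bool Bool CB ⟨true⟩ (fun x => if x then b else a)
    have := hf' false true
    simp only [CB] at this
    exact ⟨f' false true, this.symm⟩
end

section
/- Let Â, B̂, Ĉ be change actions with the product change action on A × B defined componentwise. A function f : A × B → C is differentiable from Â × B̂ to Ĉ if and only if for every fixed a ∈ A and b ∈ B the partially applied functions f(a, ·) : B → C and f(·, b) : A → C are differentiable. -/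
/-- The product change action, defined componentwise. -/
def ChangeAction.prod {A ΔA B ΔB : Type*}
    (CA : ChangeAction A ΔA) (CB : ChangeAction B ΔB) :
    ChangeAction (A × B) (ΔA × ΔB) where
  mul x y := (CA.mul x.1 y.1, CB.mul x.2 y.2)
  one := (CA.one, CB.one)
  mul_assoc x y z := by simp [CA.mul_assoc, CB.mul_assoc]
  one_mul x := by simp [CA.one_mul, CB.one_mul]
  mul_one x := by simp [CA.mul_one, CB.mul_one]
  act p δ := (CA.act p.1 δ.1, CB.act p.2 δ.2)
  act_one p := by simp [CA.act_one, CB.act_one]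
  act_mul p x y := by simp [CA.act_mul, CB.act_mul]

/-- A function on a product is differentiable iff both partial applications are
differentiable. -/
theorem prod_differentiable_iff {A ΔA B ΔB C ΔC : Type*}
    (CA : ChangeAction A ΔA) (CB : ChangeAction B ΔB) (CC : ChangeAction C ΔC)
    (f : A × B → C) :
    CDifferentiable (CA.prod CB) CC f ↔
      ((∀ a : A, CDifferentiable CB CC (fun b => f (a, b))) ∧
       (∀ b : B, CDifferentiable CA CC (fun a => f (a, b)))) := by
  constructor
  · rintro ⟨f', hf'⟩
    constructor
    · intro a
      refine ⟨fun b δb => f' (a, b) (CA.one, δb), fun b δb => ?_⟩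
      have := hf' (a, b) (CA.one, δb)
      simpa [ChangeAction.prod, CA.act_one] using this
    · intro b
      refine ⟨fun a δa => f' (a, b) (δa, CB.one), fun a δa => ?_⟩
      have := hf' (a, b) (δa, CB.one)
      simpa [ChangeAction.prod, CB.act_one] using this
  · rintro ⟨hB, hA⟩
    choose g hg using hB
    choose h hh using hA
    refine ⟨fun p δ => CC.mul (h p.2 p.1 δ.1) (g (CA.act p.1 δ.1) p.2 δ.2), ?_⟩
    rintro ⟨a, b⟩ ⟨δa, δb⟩
    have h1 := hg (CA.act a δa) b δb
    have h2 := hh b a δa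
    simp only [ChangeAction.prod, CC.act_mul]
    simp only [] at h1 h2
    rw [show f (CA.act a δa, CB.act b δb) = _ from h1, h2]
end

section
/- Let L be a Boolean algebra with the change action L̂_⋈ (changes are disjoint pairs (p,q), action a ⊕ (p,q) = (a ∨ p) ∧ ¬q). Then a ⊖_⊥ b := (a ∧ ¬b, ¬a) and a ⊖_⊤ b := (a, b ∧ ¬a) are both minus operators, i.e. for all a, b ∈ L, b ⊕ (a ⊖_⊥ b) = a and b ⊕ (a ⊖_⊤ b) = a, and both produce disjoint pairs. -/
/-- In a Boolean algebra with the `⋈` change action `a ⊕ (p,q) = (a ⊔ p) ⊓ qᶜ`,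
both `a ⊖⊥ b = (a ⊓ bᶜ, aᶜ)` and `a ⊖⊤ b = (a, b ⊓ aᶜ)` are disjoint pairs and
are minus operators. -/
theorem bowtie_minus_operators {L : Type*} [BooleanAlgebra L] (a b : L) :
    ((a ⊓ bᶜ) ⊓ aᶜ = ⊥) ∧ ((b ⊔ (a ⊓ bᶜ)) ⊓ aᶜᶜ = a) ∧
    (a ⊓ (b ⊓ aᶜ) = ⊥) ∧ ((b ⊔ a) ⊓ (b ⊓ aᶜ)ᶜ = a) := by
  refine ⟨?_, ?_, ?_, ?_⟩
  · rw [inf_right_comm, inf_compl_eq_bot, bot_inf_eq]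
  · rw [compl_compl, ← sdiff_eq, inf_eq_right]
    exact le_sup_sdiff
  · rw [inf_left_comm, inf_compl_eq_bot, inf_bot_eq]
  · rw [compl_inf, compl_compl, sup_comm b a, sup_comm bᶜ a, ← sup_inf_left,
      inf_compl_eq_bot, sup_bot_eq]
end

section
/- Let be a change action and B̂ an ordered change action (B and ΔB are posets, ⊕_B and the monoid operation are monotone). Let f : A → B and g : A × ΔA → ΔB. If f̂⁺ and f̂⁻ are derivatives of f with f̂⁺ ≤_Δ g ≤_Δ f̂⁻ pointwise (where δ ≤_Δ δ' means b ⊕ δ ≤ b ⊕ δ' for all b ∈ B), then g is a derivative of f. -/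
/-- Sandwich lemma: a function squeezed (in the order `δ ≤_Δ δ'` iff
`b ⊕ δ ≤ b ⊕ δ'` for all `b`) between two derivatives of `f` is itself a
derivative of `f`. Here `B̂` is an ordered change action. -/
theorem sandwich_lemma {A ΔA B ΔB : Type*} [PartialOrder B] [PartialOrder ΔB]
    (CA : ChangeAction A ΔA) (CB : ChangeAction B ΔB)
    (hact_mono : ∀ (b b' : B) (δ δ' : ΔB), b ≤ b' → δ ≤ δ' → CB.act b δ ≤ CB.act b' δ')
    (hmul_mono : ∀ (x x' y y' : ΔB), x ≤ x' → y ≤ y' → CB.mul x y ≤ CB.mul x' y')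
    (f : A → B) (g fPlus fMinus : A → ΔA → ΔB)
    (hPlus : IsDerivative CA CB f fPlus) (hMinus : IsDerivative CA CB f fMinus)
    (h₁ : ∀ (a : A) (δa : ΔA) (b : B), CB.act b (fPlus a δa) ≤ CB.act b (g a δa))
    (h₂ : ∀ (a : A) (δa : ΔA) (b : B), CB.act b (g a δa) ≤ CB.act b (fMinus a δa)) :
    IsDerivative CA CB f g := by
  intro a δ
  have h1 := h₁ a δ (f a)
  have h2 := h₂ a δ (f a)
  rw [← hPlus a δ] at h1
  rw [← hMinus a δ] at h2
  exact le_antisymm h1 h2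
end

section
/- Let Â be a change action on a poset A such that ⊕ : A × ΔA → A is monotone in its first argument. Define δa ≤_Δ δb iff a ⊕ δa ≤ a ⊕ δb for all a ∈ A. Then ≤_Δ is a partial pre-order on ΔA under which Â is an ordered change action: ⊕ is monotone A × ΔA → A and the monoid operation is monotone ΔA × ΔA → ΔA. -/
/-- If `⊕` is monotone in its first argument over a poset `A`, then the relation
`δa ≤_Δ δb` iff `∀ a, a ⊕ δa ≤ a ⊕ δb` is a preorder making the change action
ordered: `⊕` and the monoid operation are (jointly) monotone. -/
theorem ordered_changeAction_of_mono_fst {A ΔA : Type*} [PartialOrder A]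
    (CA : ChangeAction A ΔA)
    (hmono : ∀ δ : ΔA, Monotone fun a : A => CA.act a δ) :
    (∀ x : ΔA, ∀ a : A, CA.act a x ≤ CA.act a x) ∧
    (∀ x y z : ΔA, (∀ a : A, CA.act a x ≤ CA.act a y) →
      (∀ a : A, CA.act a y ≤ CA.act a z) → (∀ a : A, CA.act a x ≤ CA.act a z)) ∧
    (∀ (a a' : A) (x x' : ΔA), a ≤ a' → (∀ b : A, CA.act b x ≤ CA.act b x') →
      CA.act a x ≤ CA.act a' x') ∧
    (∀ x x' y y' : ΔA, (∀ a : A, CA.act a x ≤ CA.act a x') →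
      (∀ a : A, CA.act a y ≤ CA.act a y') →
      (∀ a : A, CA.act a (CA.mul x y) ≤ CA.act a (CA.mul x' y'))) := by
  refine ⟨fun x a => le_refl _, fun x y z h1 h2 a => (h1 a).trans (h2 a),
    fun a a' x x' ha hx => (hx a).trans (hmono x' ha),
    fun x x' y y' hx hy a => ?_⟩
  rw [CA.act_mul, CA.act_mul]
  exact (hy _).trans (hmono y' (hx a))
end

section
/- Let L be a complete Boolean algebra. The change action L̂_⋈ is continuous: L and L ⋈ L are dcpos (with directed suprema on L ⋈ L given by ⊔(p_i,q_i) = ((⋁ p_i) ∧ ¬(⋀ q_i), ⋀ q_i), where the order on L ⋈ L is the induced change order), and the action ⊕ : L × (L ⋈ L) → L is Scott-continuous in each argument; in particular a ⊕ ⊔(p_i, q_i) = ⊔ (a ⊕ (p_i, q_i)) for a directed family of changes. -/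
/-- Continuity of the `⋈` change action on a complete Boolean algebra: the
supremum of a directed family of disjoint changes `(p i, q i)` (directed for
`(p,q) ≤ (p',q')` iff `p ≤ p'` and `q' ≤ q`) is given by
`((⨆ p i) ⊓ (⨅ q i)ᶜ, ⨅ q i)`; it is a disjoint pair, an upper bound, least
among disjoint upper bounds, and the action `a ⊕ (p,q) = (a ⊔ p) ⊓ qᶜ` is
continuous in each argument. -/
theorem bowtie_continuous {L : Type*} [CompleteBooleanAlgebra L]
    {ι : Type*} [Nonempty ι] (p q : ι → L)
    (hdisj : ∀ i, p i ⊓ q i = ⊥)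
    (hdir : Directed (fun x y : L × L => x.1 ≤ y.1 ∧ y.2 ≤ x.2) fun i => (p i, q i)) :
    (((⨆ i, p i) ⊓ (⨅ i, q i)ᶜ) ⊓ (⨅ i, q i) = ⊥) ∧
    (∀ i, p i ≤ (⨆ i, p i) ⊓ (⨅ i, q i)ᶜ ∧ (⨅ i, q i) ≤ q i) ∧
    (∀ r s : L, r ⊓ s = ⊥ → (∀ i, p i ≤ r ∧ s ≤ q i) →
      ((⨆ i, p i) ⊓ (⨅ i, q i)ᶜ ≤ r ∧ s ≤ ⨅ i, q i)) ∧
    (∀ a : L, (a ⊔ ((⨆ i, p i) ⊓ (⨅ i, q i)ᶜ)) ⊓ (⨅ i, q i)ᶜ =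
      ⨆ i, (a ⊔ p i) ⊓ (q i)ᶜ) ∧
    (∀ a : ι → L, Directed (· ≤ ·) a → ∀ r s : L, r ⊓ s = ⊥ →
      ((⨆ i, a i) ⊔ r) ⊓ sᶜ = ⨆ i, (a i ⊔ r) ⊓ sᶜ) := by
  have hpq : ∀ i, p i ≤ (q i)ᶜ := fun i =>
    le_compl_iff_disjoint_right.mpr (disjoint_iff.mpr (hdisj i))
  have hPle : (⨆ i, p i) ≤ (⨅ i, q i)ᶜ := by
    rw [compl_iInf]
    exact iSup_le fun i => le_iSup_of_le i (hpq i)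
  refine ⟨?_, ?_, ?_, ?_, ?_⟩
  · rw [inf_assoc, compl_inf_eq_bot, inf_bot_eq]
  · intro i
    exact ⟨le_inf (le_iSup p i) ((hpq i).trans (compl_le_compl (iInf_le q i))),
      iInf_le q i⟩
  · intro r s _ h
    exact ⟨inf_le_left.trans (iSup_le fun i => (h i).1), le_iInf fun i => (h i).2⟩
  · intro a
    have hP : (⨆ i, p i) ⊓ (⨅ i, q i)ᶜ = ⨆ i, p i := inf_eq_left.mpr hPle
    rw [hP]
    have : ∀ i, (a ⊔ p i) ⊓ (q i)ᶜ = (a ⊓ (q i)ᶜ) ⊔ p i := by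
      intro i
      rw [inf_sup_right, inf_eq_left.mpr (hpq i)]
    simp only [this]
    rw [iSup_sup_eq, ← inf_iSup_eq, ← compl_iInf, inf_sup_right,
      inf_eq_left.mpr hPle]
  · intro a _ r s _
    rw [show (⨆ i, (a i ⊔ r) ⊓ sᶜ) = (⨆ i, a i ⊔ r) ⊓ sᶜ from (iSup_inf_eq _ _).symm,
      iSup_sup]
end

section
/- Let A and B be dcpos with least elements, f : A → A and g : A × B → B Scott-continuous, and define h : A × B → A × B by h(a,b) = (f(a), g(a,b)). Then lfp(h) = (lfp(f), lfp(λ b. g(lfp(f), b))), where lfp denotes the least fixed point. -/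
/-!
By Kleene's theorem the least fixed point of a continuous map lies below each of its prefixed
points. Now `(a₀, b₀)` is a fixed point of `h`, and if `(x, y)` is another one then `a₀ ≤ x`, so
monotonicity of `g` makes `y` a prefixed point of `g (a₀, ·)`, whence `b₀ ≤ y`.
-/

open OmegaCompletePartialOrder

theorem OmegaCompletePartialOrder.ωScottContinuous.le_of_isLeast_fixedPoints_of_map_le
    {α : Type*} [OmegaCompletePartialOrder α] [OrderBot α] {φ : α → α}
    (hφ : ωScottContinuous φ) {x₀ : α} (hx₀ : IsLeast {x | φ x = x} x₀) {c : α}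
    (hc : φ c ≤ c) : x₀ ≤ c := by
  let F : α →𝒄 α := .ofFun φ hφ
  have hkleene := fixedPoints.ωSup_iterate_mem_fixedPoint F ⊥ bot_le
  exact (hx₀.2 hkleene).trans (fixedPoints.ωSup_iterate_le_prefixedPoint F ⊥ bot_le hc bot_le)

theorem factoring_fixpoints_general {A B : Type*}
    [CompletePartialOrder A] [CompletePartialOrder B]
    (f : A → A) (g : A × B → B)
    (hg : ScottContinuous g)
    (a₀ : A) (b₀ : B)
    (ha : IsLeast {a : A | f a = a} a₀)
    (hb : IsLeast {b : B | g (a₀, b) = b} b₀) :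
    IsLeast {p : A × B | (f p.1, g p) = p} (a₀, b₀) := by
  have hg₀ : ωScottContinuous fun b : B => g (a₀, b) :=
    (((ScottContinuous.const a₀).prodMk ScottContinuous.id).comp hg).ωScottContinuous
  refine ⟨Prod.ext ha.1 hb.1, ?_⟩
  rintro ⟨x, y⟩ hxy
  obtain ⟨hx, hy⟩ := Prod.mk.inj hxy
  have hax : a₀ ≤ x := ha.2 hx
  have hy_prefixed : g (a₀, y) ≤ y :=
    (hg.monotone (show (a₀, y) ≤ (x, y) from ⟨hax, le_rfl⟩)).trans hy.le
  exact ⟨hax, hg₀.le_of_isLeast_fixedPoints_of_map_le hb hy_prefixed⟩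

/-- Bekić-style factoring of least fixed points: for Scott-continuous
`f : A → A` and `g : A × B → B` over pointed dcpos, with `h (a, b) = (f a, g (a, b))`,
the least fixed point of `h` is `(lfp f, lfp (fun b => g (lfp f, b)))`. -/
theorem factoring_fixpoints {A B : Type*}
    [CompletePartialOrder A] [OrderBot A] [CompletePartialOrder B] [OrderBot B]
    (f : A → A) (g : A × B → B)
    (hf : ScottContinuous f) (hg : ScottContinuous g)
    (a₀ : A) (b₀ : B)
    (ha : IsLeast {a : A | f a = a} a₀)
    (hb : IsLeast {b : B | g (a₀, b) = b} b₀) :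
    IsLeast {p : A × B | (f p.1, g p) = p} (a₀, b₀) :=
  factoring_fixpoints_general f g hg a₀ b₀ ha hb
end

section
/- Let be a complete change action with minus operator ⊖ and least element ⊥, and f : A → A differentiable with derivative f'. Define ∂₂iter(f, 0, m) := iter(f, m) ⊖ ⊥ and ∂₂iter(f, n+1, m) := f'(iter(f,n), ∂₂iter(f,n,m)), where iter(f,n) := f^n(⊥). Then for all n, m ∈ ℕ: iter(f, n + m) = iter(f, n) ⊕ ∂₂iter(f, n, m). -/
/-- The derivative of the iteration map with respect to `n`:
`∂₂iter (f, 0, m) = iter (f, m) ⊖ ⊥` and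
`∂₂iter (f, n+1, m) = f' (iter (f, n), ∂₂iter (f, n, m))`. -/
def d2Iter {A ΔA : Type*} [Bot A] (f : A → A) (f' : A → ΔA → ΔA)
    (sub : A → A → ΔA) (m : ℕ) : ℕ → ΔA
  | 0 => sub (f^[m] ⊥) ⊥
  | n + 1 => f' (f^[n] ⊥) (d2Iter f f' sub m n)

/-- `iter (f, n + m) = iter (f, n) ⊕ ∂₂iter (f, n, m)` for a complete change
action with minus operator `sub` and a derivative `f'` of `f`. -/
theorem iter_add_d2Iter {A ΔA : Type*} [Bot A] (CA : ChangeAction A ΔA)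
    (sub : A → A → ΔA) (hsub : ∀ a b : A, CA.act b (sub a b) = a)
    (f : A → A) (f' : A → ΔA → ΔA) (hf' : IsDerivative CA CA f f') :
    ∀ n m : ℕ, f^[n + m] ⊥ = CA.act (f^[n] ⊥) (d2Iter f f' sub m n) := by
  intro n m
  induction n with
  | zero => simp [d2Iter, hsub]
  | succ n ih =>
    have h1 : n + 1 + m = (n + m) + 1 := by omega
    rw [h1, Function.iterate_succ_apply', ih, hf', d2Iter,
      Function.iterate_succ_apply']
end

section
/- Let be a change action, U ⊆ A → A with a functional change action Û ⊆ ⇒ (i.e. the evaluation map ev : U × A → A has a derivative ev' satisfying (f ⊕ δf)(a ⊕ δa) = f(a) ⊕ ev'((f,a),(δf,δa))). Let fix_U and fix_ΔA be fixpoint operators on U and ΔA respectively (fix(g) is a fixed point of g whenever g has one, assumed here to return actual fixed points for the functions involved). Define adjust(f, δf)(δa) := ev'((f, fix_U(f)), (δf, δa)) and δw := fix_ΔA(adjust(f, δf)), assuming adjust(f, δf) has the fixed point δw. Then fix_U(f) ⊕ δw is a fixed point of f ⊕ δf. -/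
/-- Pseudo-derivatives of fixpoints. `U` is a set of functions on `A`
(represented by a type `U` with application map `app`), carrying a functional
change action: the evaluation map has a derivative `ev'` with
`(f ⊕ δf) (a ⊕ δa) = f a ⊕ ev' (f, a) (δf, δa)`. If `x = fix_U f` is a fixed
point of `f`, and `δw = fix_ΔA (adjust (f, δf))` is a fixed point of
`adjust (f, δf) = fun δa => ev' (f, fix_U f) (δf, δa)`, then `fix_U f ⊕ δw` is a
fixed point of `f ⊕ δf`. -/
theorem fixpoint_pseudo_derivative {A ΔA U ΔU : Type*}
    (CA : ChangeAction A ΔA) (CU : ChangeAction U ΔU)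
    (app : U → A → A)
    (ev' : U × A → ΔU × ΔA → ΔA)
    (hev : ∀ (f : U) (a : A) (δf : ΔU) (δa : ΔA),
      app (CU.act f δf) (CA.act a δa) = CA.act (app f a) (ev' (f, a) (δf, δa)))
    (f : U) (δf : ΔU) (x : A) (hx : app f x = x)
    (δw : ΔA) (hδw : δw = ev' (f, x) (δf, δw)) :
    app (CU.act f δf) (CA.act x δw) = CA.act x δw := by
  rw [hev, hx, ← hδw]
end
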